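/- Risk consistency of the Leveraged Weighted loss (pointwise form): Let K be a finite type, y : K, q : K → ℝ with q y = 1, w : K → ℝ, β : ℝ, and a : K → ℝ, b : K → ℝ (representing ψ(g z) and ψ(-g z) respectively). Define for each finite subset S of K the partial loss L̄(S) := ∑_{z ∈ S} w z · a z + β · ∑_{z ∉ S} w z · b z. Then ∑_{S ∋ y} (∏_{s ∈ S, s ≠ y} q s)(∏_{t ∉ S} (1 - q t)) · L̄(S) = w y · a y + ∑_{z ≠ y} w z · ((q z) · a z + β · (1 - q z) · b z). -/

import Mathlib

/-! Because `q y = 1`, the weights of the sets containing `y` are the full product weights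
`∏_{s ∈ S} q s · ∏_{t ∉ S} (1 - q t)`, and the sets avoiding `y` have weight `0`. The partial loss is a sum of one term per label,
`w z a z` or `β w z b z` according as `z ∈ S`, so its expectation is computed label by label
from the marginals `P(z ∈ S) = q z`, each of which is a binomial expansion of
`∏ i, (q i + (1 - q i)) = 1`. -/

open Finset

section SubsetWeight

variable {K R : Type*} [Fintype K] [DecidableEq K] [CommRing R]

-- The probability of `S` when each `i` is included independently with probability `q i`.
def subsetWeight (q : K → R) (S : Finset K) : R :=
  (∏ s ∈ S, q s) * ∏ t ∈ Sᶜ, (1 - q t)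

theorem sum_subsetWeight (q : K → R) : ∑ S, subsetWeight q S = 1 := by
  simp only [subsetWeight, ← Fintype.prod_add, add_sub_cancel, prod_const_one]

-- Expand `∏ i, (q i + g i)`, where `g` is `1 - q` with the factor at `z` replaced by `0`.
theorem sum_subsetWeight_of_mem (q : K → R) (z : K) :
    ∑ S, (if z ∈ S then subsetWeight q S else 0) = q z := by
  obtain ⟨g, hg_self, hg_ne⟩ : ∃ g : K → R, g z = 0 ∧ ∀ i ≠ z, g i = 1 - q i :=
    ⟨Function.update (fun i => 1 - q i) z 0, Function.update_self .., fun i hi =>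
      Function.update_of_ne hi ..⟩
  calc ∑ S, (if z ∈ S then subsetWeight q S else 0)
      = ∑ S, (∏ s ∈ S, q s) * ∏ t ∈ Sᶜ, g t := by
        refine sum_congr rfl fun S _ => ?_
        split_ifs with hz
        · refine congrArg _ (prod_congr rfl fun t ht => (hg_ne t ?_).symm)
          rintro rfl
          exact mem_compl.1 ht hz
        · rw [prod_eq_zero (mem_compl.2 hz) hg_self, mul_zero]
    _ = q z * ∏ i ∈ univ.erase z, (q i + g i) := by
        rw [← Fintype.prod_add, ← mul_prod_erase univ _ (mem_univ z), hg_self, add_zero]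
    _ = q z := by
        rw [prod_eq_one fun i hi => by rw [hg_ne i (ne_of_mem_erase hi), add_sub_cancel],
          mul_one]

theorem sum_subsetWeight_of_notMem (q : K → R) (z : K) :
    ∑ S, (if z ∈ S then 0 else subsetWeight q S) = 1 - q z := by
  rw [← sum_subsetWeight q, ← sum_subsetWeight_of_mem q z, ← sum_sub_distrib]
  refine sum_congr rfl fun S _ => ?_
  split_ifs <;> ring

theorem sum_subsetWeight_mul_sum_add_sum_compl (q f g : K → R) :
    ∑ S, subsetWeight q S * (∑ z ∈ S, f z + ∑ z ∈ Sᶜ, g z)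
      = ∑ z, (q z * f z + (1 - q z) * g z) := by
  have sum_add_sum_compl_eq (S : Finset K) :
      ∑ z ∈ S, f z + ∑ z ∈ Sᶜ, g z = ∑ z, if z ∈ S then f z else g z := by
    rw [sum_ite, filter_mem_eq_inter, univ_inter, ← compl_filter, filter_mem_eq_inter, univ_inter]
  simp_rw [sum_add_sum_compl_eq, mul_sum]
  rw [sum_comm]
  refine sum_congr rfl fun z _ => ?_
  rw [← sum_subsetWeight_of_notMem q z, ← sum_subsetWeight_of_mem q z, sum_mul, sum_mul,
    ← sum_add_distrib]
  refine sum_congr rfl fun S _ => ?_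
  split_ifs <;> ring

end SubsetWeight

theorem stmt_4 {K : Type*} [Fintype K] [DecidableEq K] (y : K) (q : K → ℝ) (hq : q y = 1)
    (w : K → ℝ) (β : ℝ) (a b : K → ℝ) :
    ∑ S ∈ Finset.univ.filter (fun S : Finset K => y ∈ S),
      (∏ s ∈ S.erase y, q s) * (∏ t ∈ Sᶜ, (1 - q t)) *
        ((∑ z ∈ S, w z * a z) + β * ∑ z ∈ Sᶜ, w z * b z)
      = w y * a y +
        ∑ z ∈ Finset.univ.filter (fun z => z ≠ y),
          w z * (q z * a z + β * (1 - q z) * b z) := by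
  have weight_eq (S : Finset K) : subsetWeight q S =
      if y ∈ S then (∏ s ∈ S.erase y, q s) * ∏ t ∈ Sᶜ, (1 - q t) else 0 := by
    split_ifs with hy
    · rw [subsetWeight, ← mul_prod_erase S q hy, hq, one_mul]
    · rw [subsetWeight, prod_eq_zero (mem_compl.2 hy) (by rw [hq, sub_self]), mul_zero]
  calc _ = ∑ S, subsetWeight q S * (∑ z ∈ S, w z * a z + ∑ z ∈ Sᶜ, β * (w z * b z)) := by
        rw [sum_filter]
        refine sum_congr rfl fun S _ => ?_
        rw [weight_eq, mul_sum, ite_mul, zero_mul]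
    _ = ∑ z, (q z * (w z * a z) + (1 - q z) * (β * (w z * b z))) :=
        sum_subsetWeight_mul_sum_add_sum_compl ..
    _ = _ := by
        rw [← add_sum_erase _ _ (mem_univ y), filter_ne', hq]
        congr 1
        · ring
        · exact sum_congr rfl fun z _ => by ring
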